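/- arXiv:0901.4698 — 2 statements merged into one kernel-verified Lean document; each statement's English description precedes it below -/
import Mathlib

section
/- For c ≥ 1 an integer, the polynomials ψ_n(x,c) = (x^c + xD)^n applied to 1 (where D is the q-derivative) satisfy ψ_n(x,c) = sum_{k=0}^n S[n,k; q^c] · x^{kc} · [c]^{n-k}, where S[n,k; q^c] denotes the q-Stirling number of the second kind with q replaced by q^c. -/
open Finset Matrix

/-- The q-integer `[n] = 1 + q + ... + q^(n-1)`. -/
def qint {R : Type*} [CommRing R] (q : R) (n : ℕ) : R := ∑ i ∈ Finset.range n, q ^ i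

/-- The q-factorial `[n]! = [1][2]⋯[n]`. -/
def qfact {R : Type*} [CommRing R] (q : R) (n : ℕ) : R := ∏ i ∈ Finset.range n, qint q (i + 1)

/-- The Gaussian binomial coefficient, via the q-Pascal recurrence. -/
def qbinom {R : Type*} [CommRing R] (q : R) : ℕ → ℕ → R
  | 0, 0 => 1
  | 0, _ + 1 => 0
  | _ + 1, 0 => 1
  | n + 1, k + 1 => qbinom q n k + q ^ (k + 1) * qbinom q n (k + 1)

/-- The q-Stirling numbers of the second kind:
`S[n,k] = S[n-1,k-1] + [k]·S[n-1,k]`, `S[0,k] = δ_{k0}`, `S[n,0] = δ_{n0}`. -/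
def qStirling2 {R : Type*} [CommRing R] (q : R) : ℕ → ℕ → R
  | 0, 0 => 1
  | 0, _ + 1 => 0
  | _ + 1, 0 => 0
  | n + 1, k + 1 => qStirling2 q n k + qint q (k + 1) * qStirling2 q n (k + 1)

/-- The q-Pochhammer symbol `(a;q)_m = ∏_{j<m} (1 - q^j a)`. -/
def qpoch {R : Type*} [CommRing R] (q a : R) (m : ℕ) : R := ∏ j ∈ Finset.range m, (1 - q ^ j * a)

/-- The q-derivative on polynomials: `D x^k = [k] x^(k-1)`. -/
noncomputable def qDeriv {F : Type*} [CommRing F] (q : F) (p : Polynomial F) : Polynomial F :=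
  p.sum fun k a => Polynomial.C (a * qint q k) * Polynomial.X ^ (k - 1)

lemma qint_zero {R : Type*} [CommRing R] (q : R) : qint q 0 = 0 := by simp [qint]

lemma qint_add {R : Type*} [CommRing R] (q : R) (a b : ℕ) :
    qint q (a + b) = qint q a + q ^ a * qint q b := by
  simp [qint, Finset.sum_range_add, pow_add, Finset.mul_sum]

lemma qint_mul {R : Type*} [CommRing R] (q : R) (k c : ℕ) :
    qint q (k * c) = qint (q ^ c) k * qint q c := by
  induction k with
  | zero => simp [qint]
  | succ k ih =>
      rw [Nat.succ_mul, qint_add, ih]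
      simp only [qint, Finset.sum_range_succ, ← pow_mul]
      ring

lemma qDeriv_C_mul_X_pow {F : Type*} [CommRing F] (q a : F) (m : ℕ) :
    qDeriv q (Polynomial.C a * Polynomial.X ^ m)
      = Polynomial.C (a * qint q m) * Polynomial.X ^ (m - 1) := by
  rw [Polynomial.C_mul_X_pow_eq_monomial]
  unfold qDeriv
  rw [Polynomial.sum_monomial_index]
  simp

lemma qDeriv_add {F : Type*} [CommRing F] (q : F) (p r : Polynomial F) :
    qDeriv q (p + r) = qDeriv q p + qDeriv q r := by
  unfold qDeriv
  rw [Polynomial.sum_add_index] <;> intros <;> simp [add_mul]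

lemma qDeriv_sum {F : Type*} [CommRing F] (q : F) {ι : Type*} (s : Finset ι)
    (f : ι → Polynomial F) :
    qDeriv q (∑ i ∈ s, f i) = ∑ i ∈ s, qDeriv q (f i) := by
  induction s using Finset.cons_induction with
  | empty => unfold qDeriv; simp
  | cons a s h ih => simp [Finset.sum_cons, qDeriv_add, ih]

lemma qStirling2_eq_zero {R : Type*} [CommRing R] (q : R) :
    ∀ {n k : ℕ}, n < k → qStirling2 q n k = 0 := by
  intro n
  induction n with
  | zero => intro k h; cases k with
    | zero => omega
    | succ k => rfl
  | succ n ih =>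
    intro k h
    cases k with
    | zero => omega
    | succ k =>
      simp only [qStirling2]
      rw [ih (by omega), ih (by omega)]
      ring

lemma step_mono {F : Type*} [Field F] (q : F) (c : ℕ) (hc : 1 ≤ c) (b : F) (k : ℕ) :
    Polynomial.X ^ c * (Polynomial.C b * Polynomial.X ^ (k * c)) +
        Polynomial.X * qDeriv q (Polynomial.C b * Polynomial.X ^ (k * c)) =
      Polynomial.C b * Polynomial.X ^ ((k + 1) * c) +
        Polynomial.C (b * (qint (q ^ c) k * qint q c)) * Polynomial.X ^ (k * c) := by
  rw [qDeriv_C_mul_X_pow, qint_mul]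
  cases k with
  | zero => simp [qint_zero, one_mul]
  | succ m =>
    have h1 : 1 ≤ (m + 1) * c := le_trans hc (Nat.le_mul_of_pos_left c m.succ_pos)
    have hx : (Polynomial.X : Polynomial F) * Polynomial.X ^ ((m + 1) * c - 1)
        = Polynomial.X ^ ((m + 1) * c) := by
      rw [← pow_succ', Nat.sub_add_cancel h1]
    rw [mul_left_comm Polynomial.X (Polynomial.C (b * (qint (q ^ c) (m + 1) * qint q c))), hx]
    ring

/-- `ψ_n(x,c) = (x^c + xD)^n 1 = ∑_k S[n,k;q^c] x^(kc) [c]^(n-k)`. -/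
theorem psi_eq_qStirling_sum {F : Type*} [Field F] (q : F) (c : ℕ) (hc : 1 ≤ c) (n : ℕ) :
    (fun p : Polynomial F => Polynomial.X ^ c * p + Polynomial.X * qDeriv q p)^[n] 1 =
      ∑ k ∈ Finset.range (n + 1),
        Polynomial.C (qStirling2 (q ^ c) n k * (qint q c) ^ (n - k)) * Polynomial.X ^ (k * c) := by
  induction n with
  | zero =>
    simp [qStirling2]
  | succ n ih =>
    rw [Function.iterate_succ_apply', ih]
    rw [Finset.mul_sum, qDeriv_sum, Finset.mul_sum, ← Finset.sum_add_distrib]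
    rw [Finset.sum_congr rfl (fun k _ =>
      step_mono q c hc (qStirling2 (q ^ c) n k * (qint q c) ^ (n - k)) k)]
    rw [Finset.sum_add_distrib]
    rw [Finset.sum_range_succ' (fun k => Polynomial.C (qStirling2 (q ^ c) (n + 1) k *
      (qint q c) ^ (n + 1 - k)) * Polynomial.X ^ (k * c)) (n + 1)]
    have hf0 : Polynomial.C (qStirling2 (q ^ c) (n + 1) 0 * (qint q c) ^ (n + 1 - 0)) *
        Polynomial.X ^ (0 * c) = 0 := by
      simp [qStirling2]
    rw [hf0, add_zero]
    rw [Finset.sum_range_succ' (fun k => Polynomial.C (qStirling2 (q ^ c) n k *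
      (qint q c) ^ (n - k) * (qint (q ^ c) k * qint q c)) * Polynomial.X ^ (k * c)) n]
    have hg0 : Polynomial.C (qStirling2 (q ^ c) n 0 * (qint q c) ^ (n - 0) *
        (qint (q ^ c) 0 * qint q c)) * Polynomial.X ^ (0 * c) = 0 := by
      simp [qint_zero]
    rw [hg0, add_zero]
    have hB : (∑ k ∈ Finset.range n, Polynomial.C (qStirling2 (q ^ c) n (k + 1) *
          (qint q c) ^ (n - (k + 1)) * (qint (q ^ c) (k + 1) * qint q c)) *
          Polynomial.X ^ ((k + 1) * c)) =
        ∑ k ∈ Finset.range (n + 1), Polynomial.C (qStirling2 (q ^ c) n (k + 1) *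
          (qint q c) ^ (n - (k + 1)) * (qint (q ^ c) (k + 1) * qint q c)) *
          Polynomial.X ^ ((k + 1) * c) := by
      rw [Finset.sum_range_succ, qStirling2_eq_zero (q ^ c) (Nat.lt_succ_self n)]
      simp
    rw [hB, ← Finset.sum_add_distrib]
    apply Finset.sum_congr rfl
    intro k hk
    rw [← add_mul, ← Polynomial.C_add]
    congr 1
    simp only [qStirling2]
    have hk' : k ≤ n := by simpa [Nat.lt_succ_iff] using hk
    rcases lt_or_eq_of_le hk' with h | h
    · have h2 : n + 1 - (k + 1) = n - k := by omega
      have h3 : n - k = (n - (k + 1)) + 1 := by omega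
      rw [h2, h3, pow_succ]
      ring
    · subst h
      rw [qStirling2_eq_zero (q ^ c) (Nat.lt_succ_self k)]
      simp [Nat.sub_self]
end

section
/- Define a(n,k) = qbinom(n,k) · (q^k·x; q)_{n-k}. With s(k) = q^k + q^{k-1}·x·(1 - q^k(1+q)) and t(k) = q^{2k}·(1-q^{k+1})·x·(1-q^k·x), the sequence a(n,k) satisfies the recurrence a(n,k) = a(n-1,k-1) + s(k)·a(n-1,k) + t(k)·a(n-1,k+1) for n ≥ 1. -/
open Finset Matrix

lemma qbinom_zero_right {R : Type*} [CommRing R] (q : R) (n : ℕ) : qbinom q n 0 = 1 := by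
  cases n <;> rfl

lemma qbinom_eq_zero {R : Type*} [CommRing R] (q : R) : ∀ n k, n < k → qbinom q n k = 0 := by
  intro n
  induction n with
  | zero => intro k hk; match k, hk with | k+1, _ => rfl
  | succ n ih =>
    intro k hk
    match k, hk with
    | k+1, hk =>
      show qbinom q n k + q ^ (k+1) * qbinom q n (k+1) = 0
      rw [ih k (by omega), ih (k+1) (by omega)]; ring

lemma qbinom_diag {R : Type*} [CommRing R] (q : R) : ∀ n, qbinom q n n = 1 := by
  intro n
  induction n with
  | zero => rfl
  | succ n ih =>
    show qbinom q n n + q ^ (n+1) * qbinom q n (n+1) = 1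
    rw [ih, qbinom_eq_zero q n (n+1) (by omega)]; ring

lemma qbinom_absorb {R : Type*} [CommRing R] (q : R) :
    ∀ n k, (1 - q ^ (k+1)) * qbinom q n (k+1) = (1 - q ^ (n - k)) * qbinom q n k := by
  intro n
  induction n with
  | zero =>
    intro k
    have h1 : qbinom q 0 (k+1) = 0 := qbinom_eq_zero q 0 (k+1) (by omega)
    simp [h1]
  | succ n ih =>
    intro k
    cases k with
    | zero =>
      show (1 - q^1) * (qbinom q n 0 + q^1 * qbinom q n 1) = (1 - q^(n+1-0)) * qbinom q (n+1) 0
      rw [qbinom_zero_right, qbinom_zero_right]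
      have h := ih 0
      rw [qbinom_zero_right] at h
      simp only [Nat.sub_zero] at h ⊢
      rw [pow_succ]
      linear_combination q * h
    | succ k =>
      show (1 - q^(k+2)) * (qbinom q n (k+1) + q^(k+2) * qbinom q n (k+2))
        = (1 - q^(n+1-(k+1))) * (qbinom q n k + q^(k+1) * qbinom q n (k+1))
      rcases Nat.lt_or_ge n (k+1) with h | h
      · rw [qbinom_eq_zero q n (k+1) h, qbinom_eq_zero q n (k+2) (by omega),
          show n+1-(k+1) = 0 from by omega]
        cases Nat.eq_or_lt_of_le (Nat.le_of_lt_succ h) with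
        | inl heq => subst heq; rw [qbinom_diag]; ring
        | inr hlt => rw [qbinom_eq_zero q n k (by omega)]; ring
      · obtain ⟨d, hd⟩ : ∃ d, n = k + 1 + d := ⟨n - (k+1), by omega⟩
        subst hd
        have h1 := ih (k+1)
        have h2 := ih k
        rw [show k+1+d-(k+1) = d from by omega] at h1
        rw [show k+1+d-k = d+1 from by omega] at h2
        rw [show k+1+d+1-(k+1) = d+1 from by omega]
        linear_combination q^(k+2) * h1 + h2

lemma qpoch_zero {R : Type*} [CommRing R] (q a : R) : qpoch q a 0 = 1 := by simp [qpoch]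

lemma qpoch_one {R : Type*} [CommRing R] (q a : R) : qpoch q a 1 = 1 - a := by simp [qpoch]

lemma qpoch_succ {R : Type*} [CommRing R] (q a : R) (m : ℕ) :
    qpoch q a (m+1) = qpoch q a m * (1 - q ^ m * a) := Finset.prod_range_succ _ m

lemma qpoch_succ' {R : Type*} [CommRing R] (q a : R) (m : ℕ) :
    qpoch q a (m+1) = (1 - a) * qpoch q (q * a) m := by
  rw [qpoch, Finset.prod_range_succ']
  simp only [pow_zero, one_mul, qpoch]
  rw [mul_comm]
  congr 1
  exact Finset.prod_congr rfl fun j _ => by ring_nf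

/-- `a(n,k) = qbinom(n,k) (q^k x; q)_(n-k)` satisfies the three-term recurrence with
`s(k) = q^k + q^(k-1) x (1 - q^k (1+q))` and `t(k) = q^(2k) (1-q^(k+1)) x (1-q^k x)`. -/
theorem qpoch_orthogonality_recurrence {F : Type*} [Field F] (q x : F) (hq : q ≠ 0)
    (A : ℕ → ℕ → F)
    (hA : ∀ n k, A n k = qbinom q n k * qpoch q (q ^ k * x) (n - k)) (n k : ℕ) :
    A (n + 1) k = (if k = 0 then 0 else A n (k - 1)) +
      (q ^ k + q ^ ((k : ℤ) - 1) * x * (1 - q ^ k * (1 + q))) * A n k +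
        q ^ (2 * k) * (1 - q ^ (k + 1)) * x * (1 - q ^ k * x) * A n (k + 1) := by
  cases k with
  | zero =>
    simp only [if_true, reduceIte, Nat.cast_zero, zero_sub, pow_zero, one_mul, mul_zero,
      Nat.sub_zero, _root_.zpow_neg_one, pow_one, zero_add]
    rw [hA (n+1) 0, hA n 0, hA n 1]
    simp only [pow_zero, one_mul, pow_one, Nat.sub_zero, qbinom_zero_right]
    cases n with
    | zero =>
      rw [show (0:ℕ)+1 = 1 from rfl, qpoch_one, qpoch_zero,
        qbinom_eq_zero q 0 1 (by omega)]
      field_simp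
      ring
    | succ m =>
      have habs := qbinom_absorb q (m+1) 0
      rw [qbinom_zero_right, zero_add, Nat.sub_zero] at habs
      rw [qpoch_succ q x (m+1), qpoch_succ' q x m,
        show m+1-1 = m from rfl]
      have hq' : q * q⁻¹ = 1 := mul_inv_cancel₀ hq
      set Q := qpoch q (q*x) m with hQ
      linear_combination (-(x*(1-x)*Q)) * habs + (x*(1-x)*Q*(1-q^(m+1)*x)) * hq' + (x^2*(1-x)*Q*q^(m+1)) * hq'
  | succ j =>
    simp only [if_neg (Nat.succ_ne_zero j), Nat.add_sub_cancel]
    have hz : q ^ (((j+1:ℕ):ℤ) - 1) = q ^ j := by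
      push_cast
      rw [show ((j:ℤ)+1-1) = (j:ℤ) from by ring, zpow_natCast]
    rw [hA (n+1) (j+1), hA n j, hA n (j+1), hA n (j+2), hz]
    rcases Nat.lt_or_ge n j with h | h
    · rw [qbinom_eq_zero q (n+1) (j+1) (by omega), qbinom_eq_zero q n j (by omega),
        qbinom_eq_zero q n (j+1) (by omega), qbinom_eq_zero q n (j+2) (by omega)]
      ring
    · rcases Nat.eq_or_lt_of_le h with h0 | h
      · -- n = j
        obtain rfl : n = j := by omega
        rw [show n+1-(n+1) = 0 from by omega, show n-n = 0 from by omega,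
          qbinom_diag, qbinom_diag, qbinom_eq_zero q n (n+1) (by omega),
          qbinom_eq_zero q n (n+2) (by omega), qpoch_zero, qpoch_zero]
        ring
      · rcases Nat.eq_or_lt_of_le h with h0 | h
        · -- n = j+1
          obtain rfl : n = j+1 := by omega
          have hP : qbinom q (j+1+1) (j+1) = qbinom q (j+1) j + q^(j+1) * qbinom q (j+1) (j+1) := rfl
          have habs := qbinom_absorb q (j+1) j
          rw [show j+1-j = 1 from by omega, qbinom_diag] at habs
          rw [hP, show j+1+1-(j+1) = 1 from by omega, show j+1-j = 1 from by omega,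
            show j+1-(j+1) = 0 from by omega, show j+1-(j+2) = 0 from by omega,
            qpoch_one, qpoch_one, qpoch_zero, qpoch_zero,
            qbinom_diag, qbinom_eq_zero q (j+1) (j+2) (by omega)]
          linear_combination (-(q^j*x)) * habs
        · -- n ≥ j+2
          obtain ⟨m, rfl⟩ : ∃ m, n = j + 2 + m := ⟨n - (j+2), by omega⟩
          have hP : qbinom q (j+2+m+1) (j+1)
              = qbinom q (j+2+m) j + q^(j+1) * qbinom q (j+2+m) (j+1) := rfl
          have h1 := qbinom_absorb q (j+2+m) j
          have h2 := qbinom_absorb q (j+2+m) (j+1)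
          rw [show j+2+m-j = m+2 from by omega] at h1
          rw [show j+2+m-(j+1) = m+1 from by omega] at h2
          have eA : qpoch q (q^(j+1)*x) (m+1) = (1 - q^(j+1)*x) * qpoch q (q^(j+2)*x) m := by
            rw [qpoch_succ']
            congr 2
            ring
          have eB : qpoch q (q^j*x) (m+2) = (1 - q^j*x) * qpoch q (q^(j+1)*x) (m+1) := by
            rw [qpoch_succ' q (q^j*x) (m+1)]
            congr 2
            ring
          rw [show j+2+m+1-(j+1) = m+2 from by omega, show j+2+m-j = m+2 from by omega,
            show j+2+m-(j+1) = m+1 from by omega, show j+2+m-(j+2) = m from by omega,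
            hP, qpoch_succ q (q^(j+1)*x) (m+1), eB, eA]
          set Q := qpoch q (q^(j+2)*x) m with hQ
          set b1 := qbinom q (j+2+m) j
          set b2 := qbinom q (j+2+m) (j+1)
          set b3 := qbinom q (j+2+m) (j+2)
          linear_combination (-(q^j*x*(1-q^(j+1)*x)*Q)) * h1
            + (-(q^(2*(j+1))*x*(1-q^(j+1)*x)*Q)) * h2
end
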